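/- arXiv:2105.09838 — 2 statements merged into one kernel-verified Lean document; each statement's English description precedes it below -/
import Mathlib

section
/- Let α ∈ (0,1], u > 0, and let F : [0,1]^n → [0,1] be differentiable. Then for every fixed τ ∈ [0,1], the map x ↦ H̃(x,τ) is differentiable and its gradient is given by the closed form ∇ₓH̃(x,τ) = (1/α)·( 1 − min{ max{ (F(x) − τ)/u, 0 }, 1 } )·∇F(x) for all x ∈ [0,1]^n. -/
/-!
Substituting `s = ξ - v` moves the value `v = F x` into the limits of integration, so by the
fundamental theorem of calculus `∂ᵥ ∫₀ᵘ max(τ + ξ - v, 0) dξ = max(τ - v, 0) - max(τ + u - v, 0)`.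
A case split on the position of `v - τ` relative to `0` and `u` shows
`(max(τ + u - v, 0) - max(τ - v, 0)) / u = 1 - min(max((v - τ)/u, 0), 1)`,
and the chain rule turns the derivative in `v` into the stated gradient.
-/

open MeasureTheory

/-- The unit cube `[0,1]^n` in `ℝⁿ` (with the Euclidean norm). -/
def cube (n : ℕ) : Set (EuclideanSpace ℝ (Fin n)) :=
  {x | ∀ i, x i ∈ Set.Icc (0:ℝ) 1}

/-- The `u`-smoothed CVaR auxiliary function
`H̃(x,τ) = (1/u)·∫₀ᵘ (τ + ξ - (1/α)·max{τ + ξ - F(x), 0}) dξ`,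
expressed as a function of the value `v = F(x)`. -/
noncomputable def smoothAuxH (α u : ℝ) (v τ : ℝ) : ℝ :=
  (1 / u) * ∫ ξ in (0:ℝ)..u, (τ + ξ - (1 / α) * max (τ + ξ - v) 0)

theorem HasDerivAt.comp_hasGradientAt {F : Type*} [NormedAddCommGroup F]
    [InnerProductSpace ℝ F] [CompleteSpace F] {g : ℝ → ℝ} {g' : ℝ} {f : F → ℝ} {f' x : F}
    (hg : HasDerivAt g g' (f x)) (hf : HasGradientAt f f' x) :
    HasGradientAt (g ∘ f) (g' • f') x := by
  rw [hasGradientAt_iff_hasFDerivAt, map_smul]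
  exact hg.comp_hasFDerivAt x hf.hasFDerivAt

theorem hasDerivAt_intervalIntegral_comp_sub {φ : ℝ → ℝ} (hφ : Continuous φ) (a b v : ℝ) :
    HasDerivAt (fun w => ∫ ξ in a..b, φ (ξ - w)) (φ (a - v) - φ (b - v)) v := by
  have hshift : (fun w => ∫ ξ in a..b, φ (ξ - w))
      = fun w => (∫ s in a..b - w, φ s) - ∫ s in a..a - w, φ s := by
    funext w
    rw [intervalIntegral.integral_comp_sub_right,
      intervalIntegral.integral_interval_sub_left (hφ.intervalIntegrable _ _)
        (hφ.intervalIntegrable _ _)]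
  have hb := (hφ.integral_hasStrictDerivAt a (b - v)).hasDerivAt.comp v
    ((hasDerivAt_id v).const_sub b)
  have ha := (hφ.integral_hasStrictDerivAt a (a - v)).hasDerivAt.comp v
    ((hasDerivAt_id v).const_sub a)
  rw [hshift]
  refine (hb.sub ha).congr_deriv ?_
  ring

theorem sub_max_neg_div_eq_one_sub_clamp {u : ℝ} (hu : 0 < u) (a : ℝ) :
    (max (u - a) 0 - max (-a) 0) / u = 1 - min (max (a / u) 0) 1 := by
  rcases le_total a 0 with ha | ha
  · rw [max_eq_right (div_nonpos_of_nonpos_of_nonneg ha hu.le), min_eq_left zero_le_one,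
      max_eq_left (by linarith), max_eq_left (by linarith)]
    field_simp
    ring
  rcases le_total a u with hau | hau
  · rw [max_eq_left (div_nonneg ha hu.le), min_eq_left ((div_le_one hu).2 hau),
      max_eq_left (by linarith), max_eq_right (by linarith)]
    field_simp
    ring
  · rw [max_eq_left (div_nonneg ha hu.le), min_eq_right ((one_le_div hu).2 hau),
      max_eq_right (by linarith), max_eq_right (by linarith)]
    simp

theorem hasDerivAt_smoothAuxH (α τ : ℝ) {u : ℝ} (hu : 0 < u) (v : ℝ) :
    HasDerivAt (fun w => smoothAuxH α u w τ)
      ((1 / α) * (1 - min (max ((v - τ) / u) 0) 1)) v := by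
  have hsplit : (fun w => smoothAuxH α u w τ) = fun w => (1 / u) *
      ((∫ ξ in (0:ℝ)..u, (τ + ξ)) - (1 / α) * ∫ ξ in (0:ℝ)..u, max (τ + (ξ - w)) 0) := by
    funext w
    rw [smoothAuxH]
    congr 1
    rw [← intervalIntegral.integral_const_mul, ← intervalIntegral.integral_sub
      (Continuous.intervalIntegrable (by fun_prop) _ _)
      (Continuous.intervalIntegrable (by fun_prop) _ _)]
    simp only [add_sub_assoc]
  have hφ : Continuous fun s : ℝ => max (τ + s) 0 := by fun_prop
  rw [hsplit]
  refine ((((hasDerivAt_intervalIntegral_comp_sub hφ 0 u v).const_mul (1 / α)).const_sub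
    (∫ ξ in (0:ℝ)..u, (τ + ξ))).const_mul (1 / u)).congr_deriv ?_
  rw [← sub_max_neg_div_eq_one_sub_clamp hu]
  ring_nf

theorem stmt2_general (n : ℕ) (α u : ℝ) (hu : 0 < u)
    (F : EuclideanSpace ℝ (Fin n) → ℝ)
    (hdiff : Differentiable ℝ F)
    (τ : ℝ) :
    ∀ x ∈ cube n,
      DifferentiableAt ℝ (fun y => smoothAuxH α u (F y) τ) x ∧
      gradient (fun y => smoothAuxH α u (F y) τ) x
        = ((1 / α) * (1 - min (max ((F x - τ) / u) 0) 1)) • gradient F x := by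
  intro x _
  have hgrad : HasGradientAt (fun y => smoothAuxH α u (F y) τ)
      (((1 / α) * (1 - min (max ((F x - τ) / u) 0) 1)) • gradient F x) x :=
    (hasDerivAt_smoothAuxH α τ hu (F x)).comp_hasGradientAt (hdiff x).hasGradientAt
  exact ⟨hgrad.differentiableAt, hgrad.gradient⟩

/-- If `F : [0,1]ⁿ → [0,1]` is differentiable, then for every fixed `τ ∈ [0,1]` the map
`x ↦ H̃(x,τ)` is differentiable with gradient
`(1/α)·(1 - min{max{(F(x) - τ)/u, 0}, 1})·∇F(x)`. -/
theorem stmt2 (n : ℕ) (α u : ℝ) (hα : α ∈ Set.Ioc (0:ℝ) 1) (hu : 0 < u)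
    (F : EuclideanSpace ℝ (Fin n) → ℝ)
    (hrange : ∀ x ∈ cube n, F x ∈ Set.Icc (0:ℝ) 1)
    (hdiff : Differentiable ℝ F)
    (τ : ℝ) (hτ : τ ∈ Set.Icc (0:ℝ) 1) :
    ∀ x ∈ cube n,
      DifferentiableAt ℝ (fun y => smoothAuxH α u (F y) τ) x ∧
      gradient (fun y => smoothAuxH α u (F y) τ) x
        = ((1 / α) * (1 - min (max ((F x - τ) / u) 0) 1)) • gradient F x :=
  stmt2_general n α u hu F hdiff τ
end

section
/- Let α ∈ (0,1], u > 0, F : [0,1]^n → [0,1] and x ∈ [0,1]^n be fixed. Then the map τ ↦ H̃(x,τ) is concave and differentiable on ℝ, its derivative equals ∂H̃/∂τ(x,τ) = 1 − (1/(α·u))·(measure of {ξ ∈ [0,u] : τ + ξ > F(x)}) and always lies in the interval [1 − 1/α, 1]; in particular |∂H̃/∂τ(x,τ)| ≤ max{1, 1/α − 1} for all τ. -/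
open MeasureTheory

/-!
After the substitution `s = τ + ξ`, `τ ↦ H̃(x, τ)` is the average of the kink
`g(s) = s - (1/α)·max{s - v, 0}`, `v = F(x)`, over the window `[τ, τ + u]`, so its derivative is
`(g(τ + u) - g(τ)) / u`. The increment of `max{· - v, 0}` over the window is the length of the
part of the window above `v`; it lies in `[0, u]`, which bounds the derivative, and grows with `τ`,
so the derivative is antitone and `H̃` is concave in `τ`.
-/

open Set

theorem hasDerivAt_intervalIntegral_comp_const_add {g : ℝ → ℝ} (hg : Continuous g)
    (a b τ : ℝ) :
    HasDerivAt (fun τ => ∫ ξ in a..b, g (τ + ξ)) (g (τ + b) - g (τ + a)) τ := by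
  have h_eq : (fun τ => ∫ ξ in a..b, g (τ + ξ))
      = fun τ => (∫ s in (0:ℝ)..τ + b, g s) - ∫ s in (0:ℝ)..τ + a, g s := by
    funext τ
    rw [intervalIntegral.integral_comp_add_left,
      intervalIntegral.integral_interval_sub_left (hg.intervalIntegrable _ _)
        (hg.intervalIntegrable _ _)]
  rw [h_eq]
  exact ((hg.integral_hasStrictDerivAt 0 _).hasDerivAt.comp τ ((hasDerivAt_id τ).add_const b)).sub
    ((hg.integral_hasStrictDerivAt 0 _).hasDerivAt.comp τ ((hasDerivAt_id τ).add_const a))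
    |>.congr_deriv (by simp)

theorem Real.volume_real_Icc_inter_Ioi {a b : ℝ} (hab : a ≤ b) (c : ℝ) :
    volume.real (Icc a b ∩ Ioi c) = max (b - c) 0 - max (a - c) 0 := by
  rw [measureReal_congr ((Ioc_ae_eq_Icc (a := a) (b := b)).symm.inter (ae_eq_refl (Ioi c))),
    Ioc_inter_Ioi, Real.volume_real_Ioc]
  rcases le_total a c with h | h
  · simp [max_eq_right h, sub_nonpos.mpr h]
  · rw [sup_eq_left.mpr h, max_eq_left (by linarith), max_eq_left (by linarith),
      max_eq_left (by linarith)]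
    ring

theorem sep_Icc_lt_add_eq_inter_Ioi (u v τ : ℝ) :
    {ξ ∈ Icc (0:ℝ) u | v < τ + ξ} = Icc 0 u ∩ Ioi (v - τ) := by
  ext ξ
  simp only [mem_sep_iff, mem_inter_iff, mem_Ioi, sub_lt_iff_lt_add']

theorem monotone_volume_real_sep_Icc_lt_add (u v : ℝ) :
    Monotone fun τ => volume.real {ξ ∈ Icc (0:ℝ) u | v < τ + ξ} := fun τ τ' hττ' =>
  measureReal_mono (fun ξ hξ => ⟨hξ.1, hξ.2.trans_le (by linarith)⟩)
    ((measure_mono (sep_subset _ _)).trans_lt measure_Icc_lt_top).ne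

theorem volume_real_sep_Icc_le {u : ℝ} (hu : 0 ≤ u) (p : ℝ → Prop) :
    volume.real {ξ ∈ Icc (0:ℝ) u | p ξ} ≤ u := by
  calc volume.real {ξ ∈ Icc (0:ℝ) u | p ξ} ≤ volume.real (Icc (0:ℝ) u) :=
        measureReal_mono (sep_subset _ _) measure_Icc_lt_top.ne
    _ = u := by rw [Real.volume_real_Icc_of_le hu, sub_zero]

theorem hasDerivAt_smoothAuxH_s3 (α v : ℝ) {u : ℝ} (hu : 0 < u) (τ : ℝ) :
    HasDerivAt (smoothAuxH α u v)
      (1 - 1 / (α * u) * volume.real {ξ ∈ Icc (0:ℝ) u | v < τ + ξ}) τ := by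
  have hg : Continuous fun s : ℝ => s - 1 / α * max (s - v) 0 := by fun_prop
  refine ((hasDerivAt_intervalIntegral_comp_const_add hg 0 u τ).const_mul (1 / u)).congr_deriv ?_
  rw [sep_Icc_lt_add_eq_inter_Ioi, Real.volume_real_Icc_inter_Ioi hu.le,
    show u - (v - τ) = τ + u - v by ring, show 0 - (v - τ) = τ + 0 - v by ring]
  field_simp
  ring

theorem one_sub_div_mul_mem_Icc {α u m : ℝ} (hα : 0 < α) (hu : 0 < u) (hm₀ : 0 ≤ m)
    (hmu : m ≤ u) : 1 - 1 / (α * u) * m ∈ Icc (1 - 1 / α) 1 := by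
  have hc : 0 ≤ 1 / (α * u) := by positivity
  have hm_le : 1 / (α * u) * m ≤ 1 / α := calc
    1 / (α * u) * m ≤ 1 / (α * u) * u := mul_le_mul_of_nonneg_left hmu hc
    _ = 1 / α := by field_simp
  exact ⟨by linarith, by linarith [mul_nonneg hc hm₀]⟩

theorem stmt3_general (n : ℕ) (α u : ℝ) (hα : α ∈ Set.Ioc (0:ℝ) 1) (hu : 0 < u)
    (F : EuclideanSpace ℝ (Fin n) → ℝ)
    (x : EuclideanSpace ℝ (Fin n)) :
    ConcaveOn ℝ Set.univ (fun τ => smoothAuxH α u (F x) τ) ∧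
    (∀ τ : ℝ, DifferentiableAt ℝ (fun τ => smoothAuxH α u (F x) τ) τ) ∧
    (∀ τ : ℝ, deriv (fun τ => smoothAuxH α u (F x) τ) τ
        = 1 - (1 / (α * u)) * (volume {ξ ∈ Set.Icc (0:ℝ) u | F x < τ + ξ}).toReal) ∧
    (∀ τ : ℝ, deriv (fun τ => smoothAuxH α u (F x) τ) τ ∈ Set.Icc (1 - 1 / α) 1) ∧
    (∀ τ : ℝ, |deriv (fun τ => smoothAuxH α u (F x) τ) τ| ≤ max 1 (1 / α - 1)) := by
  set m : ℝ → ℝ := fun τ => volume.real {ξ ∈ Icc (0:ℝ) u | F x < τ + ξ}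
  have hD : ∀ τ, HasDerivAt (smoothAuxH α u (F x)) (1 - 1 / (α * u) * m τ) τ :=
    hasDerivAt_smoothAuxH_s3 α (F x) hu
  have hc : 0 ≤ 1 / (α * u) := by have := hα.1; positivity
  have hmem : ∀ τ, 1 - 1 / (α * u) * m τ ∈ Icc (1 - 1 / α) 1 := fun τ =>
    one_sub_div_mul_mem_Icc hα.1 hu measureReal_nonneg (volume_real_sep_Icc_le hu.le _)
  refine ⟨Antitone.concaveOn_univ_of_deriv (fun τ => (hD τ).differentiableAt) ?_,
    fun τ => (hD τ).differentiableAt, fun τ => (hD τ).deriv, fun τ => (hD τ).deriv ▸ hmem τ,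
    fun τ => ?_⟩
  · rw [show deriv (smoothAuxH α u (F x)) = _ from funext fun τ => (hD τ).deriv]
    exact fun a b hab =>
      sub_le_sub_left ((monotone_volume_real_sep_Icc_lt_add u (F x)).const_mul hc hab) 1
  · rw [(hD τ).deriv, abs_le]
    exact ⟨by linarith [(hmem τ).1, le_max_right 1 (1 / α - 1)],
      (hmem τ).2.trans (le_max_left _ _)⟩

/-- For fixed `x`, the map `τ ↦ H̃(x,τ)` is concave and differentiable on `ℝ`, its
derivative equals `1 - (1/(α·u))·|{ξ ∈ [0,u] : τ + ξ > F(x)}|`, lies in `[1 - 1/α, 1]`,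
and is bounded in absolute value by `max{1, 1/α - 1}`. -/
theorem stmt3 (n : ℕ) (α u : ℝ) (hα : α ∈ Set.Ioc (0:ℝ) 1) (hu : 0 < u)
    (F : EuclideanSpace ℝ (Fin n) → ℝ)
    (hrange : ∀ x ∈ cube n, F x ∈ Set.Icc (0:ℝ) 1)
    (x : EuclideanSpace ℝ (Fin n)) (hx : x ∈ cube n) :
    ConcaveOn ℝ Set.univ (fun τ => smoothAuxH α u (F x) τ) ∧
    (∀ τ : ℝ, DifferentiableAt ℝ (fun τ => smoothAuxH α u (F x) τ) τ) ∧
    (∀ τ : ℝ, deriv (fun τ => smoothAuxH α u (F x) τ) τ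
        = 1 - (1 / (α * u)) * (volume {ξ ∈ Set.Icc (0:ℝ) u | F x < τ + ξ}).toReal) ∧
    (∀ τ : ℝ, deriv (fun τ => smoothAuxH α u (F x) τ) τ ∈ Set.Icc (1 - 1 / α) 1) ∧
    (∀ τ : ℝ, |deriv (fun τ => smoothAuxH α u (F x) τ) τ| ≤ max 1 (1 / α - 1)) :=
  stmt3_general n α u hα hu F x
end
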